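/- Let 0 ≤ δ ≤ 1/2 and let σ_x, indexed by x = (x₀,x₁) ∈ {0,1}², be density matrices on ℂ^n whose sum S = Σ_x σ_x is positive definite. Assume that for every (x₀,x₁) ∈ {0,1}² the complement pair satisfies F(σ_{(x₀,x₁)}, σ_{(x₀⊕1, x₁⊕1)}) ≤ 2√(δ(1−δ)), and let f be the maximum of F(σ_x, σ_{x'}) over ordered pairs of distinct indices. Then the pretty good measurement success probability satisfies (1/4)·Σ_x Tr(S^{-1/2}·σ_x·S^{-1/2}·σ_x) ≥ 1 − f − √(δ(1−δ)). -/

import Mathlib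

open Matrix Kronecker ComplexOrder
open scoped MatrixOrder

/-- The trace norm `‖A‖₁ = Tr √(Aᴴ A)` of a complex matrix. -/
noncomputable def traceNorm {n : Type*} [Fintype n] [DecidableEq n] (A : Matrix n n ℂ) : ℝ :=
  ((CFC.sqrt (Aᴴ * A)).trace).re

/-- The trace distance `Δ(ρ,σ) = ‖ρ - σ‖₁ / 2`. -/
noncomputable def traceDist {n : Type*} [Fintype n] [DecidableEq n] (ρ σ : Matrix n n ℂ) : ℝ :=
  traceNorm (ρ - σ) / 2

open scoped Classical in
/-- Positive semidefinite square root (junk value `0` on non-PSD matrices). -/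
noncomputable def psdSqrt {n : Type*} [Fintype n] [DecidableEq n] (A : Matrix n n ℂ) :
    Matrix n n ℂ :=
  if h : A.PosSemidef then CFC.sqrt A else 0

/-- The fidelity `F(ρ,σ) = ‖√ρ √σ‖₁`. -/
noncomputable def fidelity {n : Type*} [Fintype n] [DecidableEq n] (ρ σ : Matrix n n ℂ) : ℝ :=
  traceNorm (psdSqrt ρ * psdSqrt σ)

/-- A density matrix: positive semidefinite with trace 1. -/
def IsDensityMatrix {n : Type*} [Fintype n] [DecidableEq n] (ρ : Matrix n n ℂ) : Prop :=
  ρ.PosSemidef ∧ ρ.trace = 1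

/-- The projector `|b⟩⟨b|` on ℂ². -/
noncomputable def proj (b : Bool) : Matrix Bool Bool ℂ := Matrix.single b b 1

/-- The strong oblivious transfer channel `F_{(x₀,x₁)}`. -/
noncomputable def sotChannel (x₀ x₁ : Bool) (ρ : Matrix (Bool × Bool) (Bool × Bool) ℂ) :
    Matrix (Bool × Bool) (Bool × Bool) ℂ :=
  ∑ i : Bool, ∑ i' : Bool,
    ρ (i, i') (i, i') •
      (((1/2 : ℂ) • (1 : Matrix Bool Bool ℂ)) ⊗ₖ proj (xor (bif xor i i' then x₁ else x₀) i'))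

/-!
Write `A_x = √σ_x`, `M = S^{-1/2}` and `Π_x = M σ_x M`. The block matrix `H = [A_x M A_y]` is a
Gram matrix, hence positive semidefinite, and `H² = [A_x A_y]` because `M S M = 1`. For a
bipartition `ε` of the indices with block sign matrix `D`, both `H - DHD` and `H² - DH²D` are twice
the part of `H`, resp. `H²`, connecting the two halves. The Powers–Størmer inequality
`Tr (H - DHD)² ≤ ‖H² - (DHD)²‖₁`, together with a split of `H² - DH²D` into Hermitian pieces
`[[0, A_x A_y], [A_y A_x, 0]]`, bounds `4 ∑_{ε x ≠ ε y} Tr(Π_x σ_y)` by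
`∑_{ε x ≠ ε y} (F(σ_x, σ_y) + F(σ_y, σ_x))`. On `{0,1}²` the three bipartitions by the first bit,
the second bit and the parity separate every ordered pair of distinct indices exactly twice, and
`∑_y Tr(Π_x σ_y) = Tr σ_x = 1`; summing the three bounds therefore controls the failure
probability by the fidelities, which are at most `2√(δ(1-δ))` for the four complementary pairs
and at most `f` for the others.
-/

local notation "blk" => Matrix.comp _ _ _ _ ℂ

namespace Matrix

variable {κ : Type*} [Fintype κ] [DecidableEq κ]

lemma PosSemidef.re_trace_mul_nonneg {P X : Matrix κ κ ℂ} (hP : P.PosSemidef)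
    (hX : X.PosSemidef) : 0 ≤ (P * X).trace.re := by
  have hX' : X = (CFC.sqrt X)ᴴ * CFC.sqrt X := by
    rw [(CFC.sqrt_nonneg X).posSemidef.1.eq, CFC.sqrt_mul_sqrt_self X hX.nonneg]
  rw [hX', ← mul_assoc, trace_mul_comm, ← mul_assoc]
  exact (RCLike.nonneg_iff.mp (hP.mul_mul_conjTranspose_same _).trace_nonneg).1

namespace IsHermitian

variable {R : Matrix κ κ ℂ} (hR : R.IsHermitian)

lemma trace_cfc (f : ℝ → ℝ) : (hR.cfc f).trace = ∑ i, (f (hR.eigenvalues i) : ℂ) := by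
  rw [IsHermitian.cfc, Unitary.conjStarAlgAut_apply, trace_mul_cycle, Unitary.coe_star_mul_self,
    one_mul, trace_diagonal]
  rfl

lemma cfc_mul (f g : ℝ → ℝ) : hR.cfc (fun t => f t * g t) = hR.cfc f * hR.cfc g := by
  simp only [IsHermitian.cfc, ← map_mul, diagonal_mul_diagonal]
  congr 2; ext; simp

lemma cfc_add (f g : ℝ → ℝ) : hR.cfc (fun t => f t + g t) = hR.cfc f + hR.cfc g := by
  simp only [IsHermitian.cfc, ← map_add, diagonal_add]
  congr 2; ext; simp

lemma cfc_sub (f g : ℝ → ℝ) : hR.cfc (fun t => f t - g t) = hR.cfc f - hR.cfc g := by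
  simp only [IsHermitian.cfc, ← map_sub, diagonal_sub]
  congr 2; ext; simp

lemma cfc_id : hR.cfc id = R := by
  conv_rhs => rw [hR.spectral_theorem]
  rfl

lemma cfc_const_one : hR.cfc (fun _ => 1) = 1 := by
  rw [IsHermitian.cfc]
  convert map_one (Unitary.conjStarAlgAut ℂ (Matrix κ κ ℂ) hR.eigenvectorUnitary)
  ext i j; simp [diagonal, one_apply]

lemma conjTranspose_cfc (f : ℝ → ℝ) : (hR.cfc f)ᴴ = hR.cfc f := by
  rw [IsHermitian.cfc, ← star_eq_conjTranspose, ← map_star, star_eq_conjTranspose,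
    diagonal_conjTranspose]
  congr 2; ext; simp

lemma posSemidef_cfc {f : ℝ → ℝ} (hf : ∀ t, 0 ≤ f t) : (hR.cfc f).PosSemidef := by
  rw [IsHermitian.cfc, Unitary.conjStarAlgAut_apply]
  refine (PosSemidef.diagonal fun i => ?_).mul_mul_conjTranspose_same _
  simpa using hf _

noncomputable def signUnitary : Matrix κ κ ℂ := hR.cfc fun t => if t < 0 then -1 else 1

lemma signUnitary_mem_unitaryGroup : hR.signUnitary ∈ unitaryGroup κ ℂ := by
  rw [mem_unitaryGroup_iff', star_eq_conjTranspose, signUnitary, conjTranspose_cfc,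
    ← hR.cfc_mul, ← hR.cfc_const_one]
  congr 1; ext t; split_ifs <;> norm_num

lemma mul_signUnitary : R * hR.signUnitary = hR.cfc (|·|) := by
  calc R * hR.signUnitary = hR.cfc id * hR.signUnitary := by rw [hR.cfc_id]
    _ = hR.cfc (|·|) := by
      rw [signUnitary, ← hR.cfc_mul]
      congr 1; ext t; split_ifs with h
      · simp [abs_of_neg h]
      · simp [abs_of_nonneg (not_lt.mp h)]

lemma signUnitary_mul : hR.signUnitary * R = R * hR.signUnitary := by
  calc hR.signUnitary * R = hR.signUnitary * hR.cfc id := by rw [hR.cfc_id]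
    _ = hR.cfc id * hR.signUnitary := by
      rw [signUnitary, ← hR.cfc_mul, ← hR.cfc_mul]; congr 1; ext t; ring
    _ = R * hR.signUnitary := by rw [hR.cfc_id]

end IsHermitian

lemma comp_mul {ι m : Type*} [Fintype ι] [Fintype m] (X Y : Matrix ι ι (Matrix m m ℂ)) :
    blk (X * Y) = blk X * blk Y :=
  map_mul (compRingEquiv ι m ℂ) X Y

lemma comp_sub {ι m : Type*} (X Y : Matrix ι ι (Matrix m m ℂ)) : blk (X - Y) = blk X - blk Y :=
  map_sub (compAddEquiv ι ι m m ℂ) X Y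

lemma comp_sum {ι m β : Type*} (s : Finset β) (X : β → Matrix ι ι (Matrix m m ℂ)) :
    blk (∑ b ∈ s, X b) = ∑ b ∈ s, blk (X b) :=
  map_sum (compAddEquiv ι ι m m ℂ) X s

lemma trace_comp {ι m : Type*} [Fintype ι] [Fintype m] (X : Matrix ι ι (Matrix m m ℂ)) :
    (blk X).trace = X.trace.trace := by
  simp [trace, Fintype.sum_prod_type, sum_apply, Finset.sum_comm (γ := m)]

lemma posSemidef_comp_gram {ι k m : Type*} [Fintype ι] [Fintype k] [Fintype m]
    (Y : ι → Matrix k m ℂ) : (blk fun x y => (Y x)ᴴ * Y y).PosSemidef := by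
  let L : Matrix k (ι × m) ℂ := of fun i p => Y p.1 i p.2
  have : (blk fun x y => (Y x)ᴴ * Y y) = Lᴴ * L := by
    ext ⟨x, i⟩ ⟨y, j⟩
    change ((Y x)ᴴ * Y y) i j = (Lᴴ * L) (x, i) (y, j)
    simp [L, mul_apply]
  exact this ▸ posSemidef_conjTranspose_mul_self L

lemma posSemidef_comp_mul_mul {ι m : Type*} [Fintype ι] [Fintype m] [DecidableEq m]
    {A : ι → Matrix m m ℂ} {M : Matrix m m ℂ}
    (hA : ∀ x, (A x).IsHermitian) (hM : M.PosSemidef) :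
    (blk (of fun x y => A x * M * A y)).PosSemidef := by
  have hR : (CFC.sqrt M)ᴴ = CFC.sqrt M := (CFC.sqrt_nonneg M).posSemidef.1
  have hgram : (of fun x y => A x * M * A y)
      = of fun x y => (CFC.sqrt M * A x)ᴴ * (CFC.sqrt M * A y) := by
    ext x y : 1
    rw [of_apply, of_apply, conjTranspose_mul, (hA x).eq, hR, mul_assoc, mul_assoc,
      ← mul_assoc (CFC.sqrt M), CFC.sqrt_mul_sqrt_self M hM.nonneg]
  rw [hgram]
  exact posSemidef_comp_gram _

lemma posSemidef_comp_diagonal {ι m : Type*} [Fintype ι] [DecidableEq ι] [Fintype m]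
    [DecidableEq m] {d : ι → Matrix m m ℂ} (hd : ∀ x, (d x).PosSemidef) :
    (blk (diagonal d)).PosSemidef := by
  have : diagonal d = (diagonal fun x => CFC.sqrt (d x))ᴴ * diagonal fun x => CFC.sqrt (d x) := by
    rw [diagonal_conjTranspose, diagonal_mul_diagonal]
    refine congrArg diagonal (funext fun x => ?_)
    rw [Pi.star_apply, star_eq_conjTranspose, (CFC.sqrt_nonneg (d x)).posSemidef.1.eq,
      CFC.sqrt_mul_sqrt_self _ (hd x).nonneg]
  rw [this, comp_mul, ← conjTranspose_comp']
  exact posSemidef_conjTranspose_mul_self _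

lemma isHermitian_single_add_single {ι m : Type*} [DecidableEq ι] (x y : ι) (B : Matrix m m ℂ) :
    (single x y B + single y x Bᴴ : Matrix ι ι (Matrix m m ℂ)).IsHermitian := by
  simp [IsHermitian, conjTranspose_single, star_eq_conjTranspose, add_comm]

section SignMatrix

variable {ι m : Type*} [DecidableEq ι] [DecidableEq m]

def signMatrix (ε : ι → Bool) : Matrix ι ι (Matrix m m ℂ) :=
  diagonal fun x => if ε x then 1 else -1

lemma signMatrix_mul_self [Fintype ι] [Fintype m] (ε : ι → Bool) :
    signMatrix (m := m) ε * signMatrix ε = 1 := by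
  rw [signMatrix, diagonal_mul_diagonal, ← diagonal_one]
  congr 1; ext1 x; split_ifs <;> simp

lemma conjTranspose_signMatrix (ε : ι → Bool) : (signMatrix (m := m) ε)ᴴ = signMatrix ε := by
  rw [signMatrix, diagonal_conjTranspose]
  congr 1; ext1 x; by_cases h : ε x <;> simp [h, star_eq_conjTranspose]

lemma sub_signMatrix_mul_mul_signMatrix_apply [Fintype ι] [Fintype m] (ε : ι → Bool)
    (X : Matrix ι ι (Matrix m m ℂ)) (x y : ι) :
    (X - signMatrix ε * X * signMatrix ε : Matrix ι ι (Matrix m m ℂ)) x y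
      = if ε x = ε y then 0 else (2 : ℂ) • X x y := by
  simp only [signMatrix, sub_apply, mul_diagonal, diagonal_mul]
  cases ε x <;> cases ε y <;> simp [two_smul]

end SignMatrix

end Matrix

open Matrix

section TraceNorm

variable {κ : Type*} [Fintype κ] [DecidableEq κ]

lemma traceNorm_eq_re_trace_of_mul_self {A W : Matrix κ κ ℂ} (hW : W.PosSemidef)
    (h : W * W = Aᴴ * A) : traceNorm A = W.trace.re := by
  rw [traceNorm, CFC.sqrt_unique h hW.nonneg]

lemma traceNorm_zero : traceNorm (0 : Matrix κ κ ℂ) = 0 := by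
  simp [traceNorm]

lemma Matrix.IsHermitian.traceNorm_eq_re_trace_cfc_abs {R : Matrix κ κ ℂ} (hR : R.IsHermitian) :
    traceNorm R = (hR.cfc (|·|)).trace.re := by
  refine traceNorm_eq_re_trace_of_mul_self (hR.posSemidef_cfc fun t => abs_nonneg t) ?_
  calc hR.cfc (|·|) * hR.cfc (|·|) = hR.cfc id * hR.cfc id := by
        rw [← hR.cfc_mul, ← hR.cfc_mul]; congr 1; ext t; exact abs_mul_abs_self t
    _ = Rᴴ * R := by rw [hR.cfc_id, hR.eq]

lemma Matrix.IsHermitian.traceNorm_eq_sum_abs {R : Matrix κ κ ℂ} (hR : R.IsHermitian) :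
    traceNorm R = ∑ i, |hR.eigenvalues i| := by
  rw [hR.traceNorm_eq_re_trace_cfc_abs, hR.trace_cfc, Complex.re_sum]
  simp

lemma Matrix.IsHermitian.re_trace_mul_signUnitary {R : Matrix κ κ ℂ} (hR : R.IsHermitian) :
    (R * hR.signUnitary).trace.re = traceNorm R := by
  rw [hR.mul_signUnitary, hR.traceNorm_eq_re_trace_cfc_abs]

lemma Matrix.IsHermitian.re_trace_mul_le_traceNorm {R W : Matrix κ κ ℂ} (hR : R.IsHermitian)
    (hW : W ∈ unitaryGroup κ ℂ) : (R * W).trace.re ≤ traceNorm R := by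
  set U : Matrix κ κ ℂ := (hR.eigenvectorUnitary : Matrix κ κ ℂ)
  have hV : star U * W * U ∈ unitaryGroup κ ℂ :=
    mul_mem (mul_mem (Unitary.star_mem hR.eigenvectorUnitary.2) hW) hR.eigenvectorUnitary.2
  have htr : (R * W).trace = ∑ i, (hR.eigenvalues i : ℂ) * (star U * W * U) i i := by
    conv_lhs => rw [hR.spectral_theorem, Unitary.conjStarAlgAut_apply]
    rw [mul_assoc, mul_assoc, trace_mul_comm, mul_assoc, mul_assoc, ← mul_assoc (star _)]
    simp [trace, diagonal_mul]
  rw [htr, Complex.re_sum, hR.traceNorm_eq_sum_abs]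
  refine Finset.sum_le_sum fun i _ => ?_
  rw [Complex.re_ofReal_mul]
  calc hR.eigenvalues i * ((star U * W * U) i i).re
      ≤ |hR.eigenvalues i| * ‖(star U * W * U) i i‖ :=
        (le_abs_self _).trans (by rw [abs_mul]; gcongr; exact Complex.abs_re_le_norm _)
    _ ≤ |hR.eigenvalues i| :=
        mul_le_of_le_one_right (abs_nonneg _) (entry_norm_bound_of_unitary hV i i)

lemma traceNorm_sum_le {β : Type*} (s : Finset β) {R : β → Matrix κ κ ℂ}
    (h : ∀ b ∈ s, (R b).IsHermitian) :
    traceNorm (∑ b ∈ s, R b) ≤ ∑ b ∈ s, traceNorm (R b) := by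
  have hsum : (∑ b ∈ s, R b).IsHermitian := isSelfAdjoint_sum s h
  rw [← hsum.re_trace_mul_signUnitary, Finset.sum_mul, trace_sum, Complex.re_sum]
  exact Finset.sum_le_sum fun b hb =>
    (h b hb).re_trace_mul_le_traceNorm hsum.signUnitary_mem_unitaryGroup

lemma trace_mul_self_sub_mul_self_mul {P Q W : Matrix κ κ ℂ} (hW : W * (P - Q) = (P - Q) * W) :
    ((P * P - Q * Q) * W).trace = ((P + Q) * ((P - Q) * W)).trace := by
  have h2 : (P + Q) * (P - Q) + (P - Q) * (P + Q) = (P * P - Q * Q) + (P * P - Q * Q) := by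
    noncomm_ring
  have hcomm : ((P - Q) * (P + Q) * W).trace = ((P + Q) * ((P - Q) * W)).trace := by
    rw [mul_assoc, trace_mul_comm, mul_assoc, ← hW]
  have key : ((P * P - Q * Q) * W).trace + ((P * P - Q * Q) * W).trace
      = ((P + Q) * ((P - Q) * W)).trace + ((P + Q) * ((P - Q) * W)).trace := by
    rw [← trace_add, ← add_mul, ← h2, add_mul, trace_add, hcomm, mul_assoc]
  linear_combination key / 2

/-- The Powers–Størmer inequality. -/
theorem re_trace_sub_mul_sub_le_traceNorm {P Q : Matrix κ κ ℂ} (hP : P.PosSemidef)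
    (hQ : Q.PosSemidef) : ((P - Q) * (P - Q)).trace.re ≤ traceNorm (P * P - Q * Q) := by
  have hΔ : (P - Q).IsHermitian := hP.1.sub hQ.1
  set W := hΔ.signUnitary
  set Δp := hΔ.cfc fun t => max t 0
  set Δm := hΔ.cfc fun t => max (-t) 0
  have hsub : P - Q = Δp - Δm := by
    rw [← hΔ.cfc_sub]
    conv_lhs => rw [← hΔ.cfc_id]
    congr 1; ext t; simp
  have habs : (P - Q) * W = Δp + Δm := by
    rw [hΔ.mul_signUnitary, ← hΔ.cfc_add]
    congr 1; ext t; simp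
  have hgap : ((P + Q) * (Δp + Δm)).trace - ((P - Q) * (Δp - Δm)).trace
      = 2 * ((Q * Δp).trace + (P * Δm).trace) := by
    simp only [add_mul, mul_add, sub_mul, mul_sub, trace_add, trace_sub]
    ring
  have hQp := hQ.re_trace_mul_nonneg (hΔ.posSemidef_cfc fun t => le_max_right t 0)
  have hPm := hP.re_trace_mul_nonneg (hΔ.posSemidef_cfc fun t => le_max_right (-t) 0)
  have hPQ : (P * P - Q * Q).IsHermitian := by
    rw [IsHermitian, conjTranspose_sub, conjTranspose_mul, conjTranspose_mul, hP.1.eq, hQ.1.eq]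
  calc ((P - Q) * (P - Q)).trace.re = ((P - Q) * (Δp - Δm)).trace.re := by
        nth_rewrite 2 [hsub]; rfl
    _ ≤ ((P + Q) * (Δp + Δm)).trace.re := by
        have := congrArg Complex.re hgap
        simp only [Complex.sub_re, Complex.mul_re, Complex.add_re] at this
        norm_num at this
        linarith
    _ = ((P * P - Q * Q) * W).trace.re := by
        rw [trace_mul_self_sub_mul_self_mul hΔ.signUnitary_mul, habs]
    _ ≤ traceNorm (P * P - Q * Q) :=
        hPQ.re_trace_mul_le_traceNorm hΔ.signUnitary_mem_unitaryGroup

end TraceNorm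

section BlockMatrices

variable {ι m : Type*} [Fintype ι] [DecidableEq ι] [Fintype m] [DecidableEq m]

lemma traceNorm_comp_single_add_single {x y : ι} (hxy : x ≠ y) (B : Matrix m m ℂ) :
    traceNorm (blk (single x y B + single y x Bᴴ)) = traceNorm B + traceNorm Bᴴ := by
  set d : ι → Matrix m m ℂ := Pi.single x (CFC.abs Bᴴ) + Pi.single y (CFC.abs B)
  have hd : ∀ u, (d u).PosSemidef := by
    intro u
    by_cases hx : u = x
    · subst hx; simpa [d, hxy] using (CFC.abs_nonneg Bᴴ).posSemidef
    by_cases hy : u = y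
    · subst hy; simpa [d, hx] using (CFC.abs_nonneg B).posSemidef
    simpa [d, hx, hy] using PosSemidef.zero
  have hdiag : diagonal d = single x x (CFC.abs Bᴴ) + single y y (CFC.abs B) := by
    rw [← diagonal_single, ← diagonal_single, diagonal_add]; rfl
  rw [traceNorm_eq_re_trace_of_mul_self (posSemidef_comp_diagonal hd), trace_comp, hdiag]
  · simp [trace_single_eq_same, traceNorm, CFC.abs, star_eq_conjTranspose, add_comm]
  · rw [conjTranspose_comp', ← comp_mul, ← comp_mul, hdiag]
    congr 1
    simp [conjTranspose_single, add_mul, mul_add, hxy, hxy.symm, CFC.abs_mul_abs,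
      star_eq_conjTranspose, add_comm]

lemma traceNorm_comp_sub_signMatrix_mul_mul_signMatrix_le {G : Matrix ι ι (Matrix m m ℂ)}
    (hG : G.IsHermitian) (ε : ι → Bool) :
    traceNorm (blk (G - signMatrix ε * G * signMatrix ε))
      ≤ ∑ x, ∑ y, if ε x = ε y then 0 else traceNorm (G x y) + traceNorm (G y x) := by
  set K : Matrix ι ι (Matrix m m ℂ) := of fun x y => if ε x = ε y then 0 else G x y
  have hK : G - signMatrix ε * G * signMatrix ε = K + Kᴴ := by
    refine Matrix.ext fun a b => ?_
    rw [sub_signMatrix_mul_mul_signMatrix_apply]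
    by_cases h : ε a = ε b
    · simp [K, h]
    · simp [K, h, Ne.symm h, two_smul, ← hG.apply a b]
  have hsplit : K + Kᴴ = ∑ x, ∑ y, (single x y (K x y) + single y x (K x y)ᴴ) := by
    have hKt : Kᴴ = ∑ x, ∑ y, single y x (K x y)ᴴ := by
      rw [matrix_eq_sum_single Kᴴ, Finset.sum_comm]
      simp [star_eq_conjTranspose]
    simp only [Finset.sum_add_distrib, ← matrix_eq_sum_single K, hKt]
  have hnorm : ∀ x y, traceNorm (blk (single x y (K x y) + single y x (K x y)ᴴ))
      = if ε x = ε y then 0 else traceNorm (G x y) + traceNorm (G y x) := by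
    intro x y
    by_cases h : ε x = ε y
    · simp only [K, of_apply, if_pos h, single_zero, conjTranspose_zero, add_zero]
      exact traceNorm_zero
    · rw [traceNorm_comp_single_add_single fun h' => h (congrArg ε h')]
      simp [K, h, ← star_eq_conjTranspose, hG.apply]
  calc traceNorm (blk (G - signMatrix ε * G * signMatrix ε))
      ≤ ∑ x, ∑ y, traceNorm (blk (single x y (K x y) + single y x (K x y)ᴴ)) := by
        rw [hK, hsplit, comp_sum]
        refine (traceNorm_sum_le _ fun x _ => ?_).trans (Finset.sum_le_sum fun x _ => ?_)
        · exact isHermitian_comp_iff.mpr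
            (isSelfAdjoint_sum _ fun y _ => isHermitian_single_add_single ..)
        · rw [comp_sum]
          exact traceNorm_sum_le _ fun y _ =>
            isHermitian_comp_iff.mpr (isHermitian_single_add_single ..)
    _ = _ := by simp only [hnorm]

theorem four_mul_sum_re_trace_le_sum_traceNorm (H : Matrix ι ι (Matrix m m ℂ))
    (hH : (blk H).PosSemidef) (ε : ι → Bool) :
    4 * ∑ x, ∑ y, (if ε x = ε y then 0 else (H x y * H y x).trace.re)
      ≤ ∑ x, ∑ y, if ε x = ε y then 0 else traceNorm ((H * H) x y) + traceNorm ((H * H) y x) := by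
  set D := signMatrix (m := m) ε
  have hQ : (blk (D * H * D)).PosSemidef := by
    have hD : Dᴴ = D := conjTranspose_signMatrix ε
    rw [comp_mul, comp_mul]
    nth_rewrite 1 [← hD]
    rw [← conjTranspose_comp']
    exact hH.conjTranspose_mul_mul_same _
  have hsq : D * H * D * (D * H * D) = D * (H * H) * D := by
    simp only [mul_assoc]
    rw [← mul_assoc D D, signMatrix_mul_self, one_mul]
  have hG : (H * H).IsHermitian := by
    rw [IsHermitian, conjTranspose_mul, (isHermitian_comp_iff.mp hH.1).eq]
  have hentry : ∀ x y, ((H - D * H * D) x y * (H - D * H * D) y x).trace.re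
      = 4 * if ε x = ε y then 0 else (H x y * H y x).trace.re := by
    intro x y
    rw [sub_signMatrix_mul_mul_signMatrix_apply, sub_signMatrix_mul_mul_signMatrix_apply]
    by_cases h : ε x = ε y
    · simp [h]
    · simp only [h, Ne.symm h, if_false, smul_mul_smul_comm, trace_smul, smul_eq_mul]
      rw [show (2 * 2 : ℂ) = (4 : ℝ) by norm_num, Complex.re_ofReal_mul]
  calc 4 * ∑ x, ∑ y, (if ε x = ε y then 0 else (H x y * H y x).trace.re)
      = ((blk H - blk (D * H * D)) * (blk H - blk (D * H * D))).trace.re := by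
        rw [← comp_sub, ← comp_mul, trace_comp]
        have htr : ∀ X : Matrix ι ι (Matrix m m ℂ), (X * X).trace = ∑ x, ∑ y, X x y * X y x :=
          fun X => by simp [Matrix.trace, mul_apply]
        simp only [htr, trace_sum, Complex.re_sum, hentry, Finset.mul_sum]
    _ ≤ traceNorm (blk H * blk H - blk (D * H * D) * blk (D * H * D)) :=
        re_trace_sub_mul_sub_le_traceNorm hH hQ
    _ = traceNorm (blk (H * H - D * (H * H) * D)) := by
        rw [← comp_mul, ← comp_mul, hsq, comp_sub]
    _ ≤ _ := traceNorm_comp_sub_signMatrix_mul_mul_signMatrix_le hG ε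

end BlockMatrices

section PrettyGoodMeasurement

variable {ι m : Type*} [Fintype ι] [Fintype m] [DecidableEq m]

noncomputable def prettyGoodMeasurement (σ : ι → Matrix m m ℂ) (x : ι) : Matrix m m ℂ :=
  (CFC.sqrt (∑ z, σ z))⁻¹ * σ x * (CFC.sqrt (∑ z, σ z))⁻¹

lemma Matrix.PosDef.inv_sqrt_mul_mul_inv_sqrt {S : Matrix m m ℂ} (hS : S.PosDef) :
    (CFC.sqrt S)⁻¹ * S * (CFC.sqrt S)⁻¹ = 1 := by
  set R := CFC.sqrt S
  have hsq : R * R = S := CFC.sqrt_mul_sqrt_self S hS.posSemidef.nonneg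
  have hunit : IsUnit R.det := (isUnit_iff_isUnit_det _).mp <|
    isUnit_of_mul_isUnit_left (hsq ▸ hS.posSemidef.posDef_iff_isUnit.mp hS)
  rw [← hsq, ← mul_assoc, nonsing_inv_mul _ hunit, one_mul, mul_nonsing_inv _ hunit]

lemma sum_trace_prettyGoodMeasurement_mul {σ : ι → Matrix m m ℂ} (hS : (∑ z, σ z).PosDef)
    (x : ι) : ∑ y, (prettyGoodMeasurement σ x * σ y).trace = (σ x).trace := by
  rw [← trace_sum, ← Finset.mul_sum, prettyGoodMeasurement]
  set M := (CFC.sqrt (∑ z, σ z))⁻¹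
  rw [mul_assoc M, mul_assoc M, trace_mul_comm, mul_assoc, mul_assoc, ← mul_assoc M,
    hS.inv_sqrt_mul_mul_inv_sqrt, mul_one]

theorem four_mul_sum_re_trace_prettyGoodMeasurement_le [DecidableEq ι]
    {σ : ι → Matrix m m ℂ} (hσ : ∀ x, (σ x).PosSemidef) (hS : (∑ z, σ z).PosDef)
    (ε : ι → Bool) :
    4 * ∑ x, ∑ y, (if ε x = ε y then 0 else (prettyGoodMeasurement σ x * σ y).trace.re)
      ≤ ∑ x, ∑ y, if ε x = ε y then 0 else fidelity (σ x) (σ y) + fidelity (σ y) (σ x) := by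
  set S := ∑ z, σ z
  set M := (CFC.sqrt S)⁻¹
  set A : ι → Matrix m m ℂ := fun x => CFC.sqrt (σ x)
  have hM : M.PosSemidef := (CFC.sqrt_nonneg S).posSemidef.inv
  have hA : ∀ x, (A x).IsHermitian := fun x => (CFC.sqrt_nonneg (σ x)).posSemidef.1
  have hAA : ∀ x, A x * A x = σ x := fun x => CFC.sqrt_mul_sqrt_self _ (hσ x).nonneg
  set H : Matrix ι ι (Matrix m m ℂ) := of fun x y => A x * M * A y
  have hH : (blk H).PosSemidef := posSemidef_comp_mul_mul hA hM
  have hHH : ∀ x y, (H * H) x y = A x * A y := fun x y => by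
    calc (H * H) x y = A x * (M * (∑ z, A z * A z) * M) * A y := by
          simp only [H, mul_apply, of_apply, Finset.mul_sum, Finset.sum_mul, mul_assoc]
      _ = A x * A y := by simp only [hAA, hS.inv_sqrt_mul_mul_inv_sqrt, mul_one, S, M]
  have htr : ∀ x y, (H x y * H y x).trace = (prettyGoodMeasurement σ x * σ y).trace :=
    fun x y => by
      calc (H x y * H y x).trace = (A x * (M * (A y * A y) * M * A x)).trace := by
            simp only [H, of_apply, mul_assoc]
        _ = (M * σ y * (M * σ x)).trace := by
            rw [trace_mul_comm, hAA]; simp only [mul_assoc, hAA]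
        _ = (prettyGoodMeasurement σ x * σ y).trace := by
            rw [trace_mul_comm]; simp only [prettyGoodMeasurement, mul_assoc]; rfl
  have hfid : ∀ x y, traceNorm (A x * A y) = fidelity (σ x) (σ y) := fun x y => by
    simp [fidelity, psdSqrt, hσ, A]
  simpa only [htr, hHH, hfid] using four_mul_sum_re_trace_le_sum_traceNorm H hH ε

end PrettyGoodMeasurement

theorem stmt_5_general {n : ℕ} (δ : ℝ)
    (σ : Bool × Bool → Matrix (Fin n) (Fin n) ℂ)
    (hσ : ∀ x, IsDensityMatrix (σ x))
    (hS : (∑ x : Bool × Bool, σ x).PosDef)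
    (hcomp : ∀ x : Bool × Bool,
      fidelity (σ x) (σ (!x.1, !x.2)) ≤ 2 * Real.sqrt (δ * (1 - δ)))
    (f : ℝ)
    (hf : IsGreatest {y : ℝ | ∃ x x' : Bool × Bool, x ≠ x' ∧ y = fidelity (σ x) (σ x')} f) :
    (1/4 : ℝ) * ∑ x : Bool × Bool,
        ((((CFC.sqrt (∑ x : Bool × Bool, σ x))⁻¹ * σ x * (CFC.sqrt (∑ x : Bool × Bool, σ x))⁻¹) * σ x).trace).re ≥
      1 - f - Real.sqrt (δ * (1 - δ)) := by
  have hpsd : ∀ x, (σ x).PosSemidef := fun x => (hσ x).1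
  have hrow : ∀ x, ∑ y, (prettyGoodMeasurement σ x * σ y).trace.re = 1 := fun x => by
    rw [← Complex.re_sum, sum_trace_prettyGoodMeasurement_mul hS, (hσ x).2, Complex.one_re]
  have hfx : ∀ x y, x ≠ y → fidelity (σ x) (σ y) ≤ f := fun x y hxy => hf.2 ⟨x, y, hxy, rfl⟩
  have h₁ := four_mul_sum_re_trace_prettyGoodMeasurement_le hpsd hS (·.1)
  have h₂ := four_mul_sum_re_trace_prettyGoodMeasurement_le hpsd hS (·.2)
  have h₃ := four_mul_sum_re_trace_prettyGoodMeasurement_le hpsd hS fun x => x.1 != x.2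
  change _ ≤ (1/4 : ℝ) * ∑ x, (prettyGoodMeasurement σ x * σ x).trace.re
  simp only [Prod.forall, Bool.forall_bool, Bool.not_true, Bool.not_false] at hrow hcomp
  obtain ⟨⟨c₁, c₂⟩, c₃, c₄⟩ := hcomp
  obtain ⟨⟨r₁, r₂⟩, r₃, r₄⟩ := hrow
  simp only [Fintype.sum_prod_type, Fintype.sum_bool] at h₁ h₂ h₃ r₁ r₂ r₃ r₄ ⊢
  norm_num at h₁ h₂ h₃
  linarith [hfx (true, true) (true, false) (by decide), hfx (true, true) (false, true) (by decide),
    hfx (true, false) (true, true) (by decide), hfx (true, false) (false, false) (by decide),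
    hfx (false, true) (true, true) (by decide), hfx (false, true) (false, false) (by decide),
    hfx (false, false) (true, false) (by decide), hfx (false, false) (false, true) (by decide)]

/-- Pretty good measurement success bound under a complement-fidelity assumption. -/
theorem stmt_5 {n : ℕ} (δ : ℝ) (hδ0 : 0 ≤ δ) (hδ1 : δ ≤ 1/2)
    (σ : Bool × Bool → Matrix (Fin n) (Fin n) ℂ)
    (hσ : ∀ x, IsDensityMatrix (σ x))
    (hS : (∑ x : Bool × Bool, σ x).PosDef)
    (hcomp : ∀ x : Bool × Bool,
      fidelity (σ x) (σ (!x.1, !x.2)) ≤ 2 * Real.sqrt (δ * (1 - δ)))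
    (f : ℝ)
    (hf : IsGreatest {y : ℝ | ∃ x x' : Bool × Bool, x ≠ x' ∧ y = fidelity (σ x) (σ x')} f) :
    (1/4 : ℝ) * ∑ x : Bool × Bool,
        ((((CFC.sqrt (∑ x : Bool × Bool, σ x))⁻¹ * σ x * (CFC.sqrt (∑ x : Bool × Bool, σ x))⁻¹) * σ x).trace).re ≥
      1 - f - Real.sqrt (δ * (1 - δ)) :=
  stmt_5_general δ σ hσ hS hcomp f hf
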